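/- Suppose on open U ⊆ ℝ² the smooth functions b₁₁, b₁₂, b₂₂, A (A > 0, B = (1/2) log A) satisfy b₁₁ + b₂₂ = 0, the Codazzi equations, the Gauss equation b₁₁b₂₂ − b₁₂² = −A·ΔB, and A(Δb)ᵢⱼ = Δᵉbᵢⱼ − 2bᵢⱼΔB = 0 for all i,j (Δ-harmonicity). Then b₁₁ = b₁₂ = b₂₂ = 0 on U, i.e., the second fundamental form vanishes identically. -/

import Mathlib

/-- Partial derivative in coordinate direction `i` on `ℝ²`. -/
noncomputable def pd (i : Fin 2) (f : ℝ × ℝ → ℝ) (x : ℝ × ℝ) : ℝ :=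
  fderiv ℝ f x (if i = 0 then (1, 0) else (0, 1))

/-- The flat Laplacian `Δf = ∂₁₁f + ∂₂₂f` on `ℝ²`. -/
noncomputable def lap (f : ℝ × ℝ → ℝ) (x : ℝ × ℝ) : ℝ :=
  pd 0 (pd 0 f) x + pd 1 (pd 1 f) x

lemma pd_congr {f g : ℝ × ℝ → ℝ} {U : Set (ℝ × ℝ)} (hU : IsOpen U) {x : ℝ × ℝ}
    (hx : x ∈ U) (h : ∀ y ∈ U, f y = g y) (i : Fin 2) : pd i f x = pd i g x := by
  unfold pd
  rw [Filter.EventuallyEq.fderiv_eq (Filter.eventuallyEq_of_mem (hU.mem_nhds hx) h)]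

lemma pd_neg (f : ℝ × ℝ → ℝ) (i : Fin 2) (x : ℝ × ℝ) :
    pd i (fun y => -f y) x = -pd i f x := by
  unfold pd; rw [fderiv_fun_neg]; simp

lemma pd_pd (f : ℝ × ℝ → ℝ) {x : ℝ × ℝ} (hf : DifferentiableAt ℝ (fderiv ℝ f) x)
    (i j : Fin 2) :
    pd i (pd j f) x = fderiv ℝ (fderiv ℝ f) x (if i = 0 then (1, 0) else (0, 1))
      (if j = 0 then (1, 0) else (0, 1)) := by
  unfold pd
  rw [fderiv_clm_apply hf (differentiableAt_const _)]
  simp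

lemma pd_symm {f : ℝ × ℝ → ℝ} {x : ℝ × ℝ} (hf : ContDiffAt ℝ (⊤ : ℕ∞) f x) (i j : Fin 2) :
    pd i (pd j f) x = pd j (pd i f) x := by
  have hd : DifferentiableAt ℝ (fderiv ℝ f) x :=
    (hf.fderiv_right (m := 1) (WithTop.coe_le_coe.mpr le_top)).differentiableAt one_ne_zero
  rw [pd_pd f hd, pd_pd f hd, (hf.isSymmSndFDerivAt (by rw [minSmoothness_of_isRCLikeNormedField]; show ((2 : ℕ∞) : WithTop ℕ∞) ≤ _; exact WithTop.coe_le_coe.mpr le_top)) _ _]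

/-- Theorem 1: a minimal Δ-harmonic surface has vanishing second fundamental
form, i.e. it is (part of) a plane.  Hypotheses: minimality `b₁₁ + b₂₂ = 0`,
Codazzi, Gauss `b₁₁b₂₂ − b₁₂² = −A·ΔB`, and Δ-harmonicity
`Δᵉbᵢⱼ − 2bᵢⱼΔB = 0`, where `B = (1/2) log A`. -/
theorem minimal_harmonic_is_plane (U : Set (ℝ × ℝ)) (hU : IsOpen U)
    (b11 b12 b22 A B : ℝ × ℝ → ℝ)
    (hb11 : ContDiffOn ℝ (⊤ : ℕ∞) b11 U) (hb12 : ContDiffOn ℝ (⊤ : ℕ∞) b12 U)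
    (hb22 : ContDiffOn ℝ (⊤ : ℕ∞) b22 U) (hA : ContDiffOn ℝ (⊤ : ℕ∞) A U)
    (hApos : ∀ x ∈ U, 0 < A x)
    (hB : B = fun x => (1 / 2) * Real.log (A x))
    (hmin : ∀ x ∈ U, b11 x + b22 x = 0)
    (hcod1 : ∀ x ∈ U, pd 1 b11 x - pd 0 b12 x = (b11 x + b22 x) * pd 1 B x)
    (hcod2 : ∀ x ∈ U, pd 0 b22 x - pd 1 b12 x = (b11 x + b22 x) * pd 0 B x)
    (hGauss : ∀ x ∈ U, b11 x * b22 x - (b12 x) ^ 2 = -(A x) * lap B x)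
    (hharm11 : ∀ x ∈ U, lap b11 x - 2 * b11 x * lap B x = 0)
    (hharm12 : ∀ x ∈ U, lap b12 x - 2 * b12 x * lap B x = 0)
    (hharm22 : ∀ x ∈ U, lap b22 x - 2 * b22 x * lap B x = 0) :
    ∀ x ∈ U, b11 x = 0 ∧ b12 x = 0 ∧ b22 x = 0 := by
  -- First Codazzi consequence: ∂₁ b11 = ∂₀ b12 on U
  have c1 : ∀ y ∈ U, pd 1 b11 y = pd 0 b12 y := by
    intro y hy
    have := hcod1 y hy
    rw [hmin y hy] at this
    linarith
  -- b22 = -b11 on U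
  have hm : ∀ y ∈ U, b22 y = -b11 y := fun y hy => by linarith [hmin y hy]
  -- Second Codazzi consequence: ∂₁ b12 = -∂₀ b11 on U
  have c2 : ∀ y ∈ U, pd 1 b12 y = -pd 0 b11 y := by
    intro y hy
    have h1 := hcod2 y hy
    rw [hmin y hy] at h1
    have h2 : pd 0 b22 y = pd 0 (fun z => -b11 z) y := pd_congr hU hy hm 0
    rw [pd_neg] at h2
    linarith
  intro x hx
  -- Δ b11 = 0 at x
  have hlap11 : lap b11 x = 0 := by
    have e1 : pd 1 (pd 1 b11) x = pd 1 (pd 0 b12) x := pd_congr hU hx c1 1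
    have e2 : pd 1 (pd 0 b12) x = pd 0 (pd 1 b12) x :=
      pd_symm (hb12.contDiffAt (hU.mem_nhds hx)) 1 0
    have e3 : pd 0 (pd 1 b12) x = pd 0 (fun y => -pd 0 b11 y) x :=
      pd_congr hU hx c2 0
    rw [pd_neg] at e3
    unfold lap
    rw [e1, e2, e3]; ring
  -- Δ b12 = 0 at x
  have hlap12 : lap b12 x = 0 := by
    have e1 : pd 0 (pd 0 b12) x = pd 0 (pd 1 b11) x :=
      pd_congr hU hx (fun y hy => (c1 y hy).symm) 0
    have e2 : pd 0 (pd 1 b11) x = pd 1 (pd 0 b11) x :=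
      pd_symm (hb11.contDiffAt (hU.mem_nhds hx)) 0 1
    have e3 : pd 1 (pd 0 b11) x = pd 1 (fun y => - pd 1 b12 y) x :=
      pd_congr hU hx (fun y hy => by rw [c2 y hy]; ring) 1
    rw [pd_neg] at e3
    unfold lap
    rw [e1, e2, e3]; ring
  -- harmonicity gives bᵢⱼ ΔB = 0
  have h11 : b11 x * lap B x = 0 := by have := hharm11 x hx; rw [hlap11] at this; linarith
  have h12 : b12 x * lap B x = 0 := by have := hharm12 x hx; rw [hlap12] at this; linarith
  -- Gauss gives A ΔB = b11² + b12²
  have hg : A x * lap B x = b11 x ^ 2 + b12 x ^ 2 := by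
    have := hGauss x hx
    rw [hm x hx] at this
    nlinarith
  have hA0 : 0 < A x := hApos x hx
  have hL : A x * (lap B x) ^ 2 = 0 := by
    have : A x * (lap B x) ^ 2 = b11 x * (b11 x * lap B x) + b12 x * (b12 x * lap B x) := by
      nlinarith [hg]
    rw [this, h11, h12]; ring
  have hLB : lap B x = 0 := by
    have h2 : (lap B x) ^ 2 = 0 := by
      rcases mul_eq_zero.mp hL with h | h
      · exact absurd h (ne_of_gt hA0)
      · exact h
    exact pow_eq_zero_iff (by norm_num) |>.mp h2
  have hsum : b11 x ^ 2 + b12 x ^ 2 = 0 := by rw [← hg, hLB]; ring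
  have h1 : b11 x = 0 := by nlinarith [sq_nonneg (b11 x), sq_nonneg (b12 x)]
  have h2 : b12 x = 0 := by nlinarith [sq_nonneg (b11 x), sq_nonneg (b12 x)]
  exact ⟨h1, h2, by rw [hm x hx, h1, neg_zero]⟩
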